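/- Let π be a permutation of dyadic intervals with [[π⁻¹(C)]] ≤ M[[C]] for all C ⊆ D. Fix D(I) ⊆ D with (D(I))* ⊆ I, K > 0, let S(I) = { J ∈ D(I) : |π(J)|/|(π(D(I)))*| ≥ K|J|/|I| }, N(I) = π⁻¹(max π(D(I))), and O(I) = (N(I) ∩ S(I)) ∪ max S(I). If Σ_{J∈max S(I)} |J|/|I| ≤ M/K, then Σ_{J∈O(I)} |J|/|I| ≤ M(M+1)/K. -/

import Mathlib

open MeasureTheory ENNReal

/-- A dyadic subinterval of `[0,1]`: `[k/2^n, (k+1)/2^n)`. -/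
structure DyadicI where
  n : ℕ
  k : ℕ
  hk : k < 2 ^ n

namespace DyadicI

/-- The underlying set of a dyadic interval. -/
noncomputable def toSet (I : DyadicI) : Set ℝ :=
  Set.Ico ((I.k : ℝ) / 2 ^ I.n) ((I.k + 1 : ℝ) / 2 ^ I.n)

/-- The length `|I| = 2^{-n}`. -/
noncomputable def len (I : DyadicI) : ℝ≥0∞ := (2 ^ I.n : ℝ≥0∞)⁻¹

/-- Containment of dyadic intervals. -/
def le (J I : DyadicI) : Prop := J.toSet ⊆ I.toSet

/-- The measure of the pointset covered by a collection of dyadic intervals. -/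
noncomputable def star (B : Set DyadicI) : ℝ≥0∞ :=
  volume (⋃ I ∈ B, I.toSet)

/-- The Carleson constant of a collection of dyadic intervals. -/
noncomputable def carleson (B : Set DyadicI) : ℝ≥0∞ :=
  ⨆ I : DyadicI, (len I)⁻¹ * ∑' J : {J : DyadicI // J ∈ B ∧ le J I}, len (J : DyadicI)

/-- Maximal intervals of a collection. -/
def maxB (B : Set DyadicI) : Set DyadicI :=
  {I | I ∈ B ∧ ∀ J ∈ B, le I J → J = I}

/-- Squared dyadic BMO norm of a coefficient family, sup over collections. -/
noncomputable def bmoSq (x : DyadicI → ℝ) : ℝ≥0∞ :=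
  ⨆ B : Set DyadicI,
    (star B)⁻¹ * ∑' I : B, ENNReal.ofReal (x I ^ 2) * len (I : DyadicI)

/-- Squared dyadic BMO norm of a coefficient family, sup over dyadic intervals. -/
noncomputable def bmoSq' (x : DyadicI → ℝ) : ℝ≥0∞ :=
  ⨆ I : DyadicI,
    (len I)⁻¹ * ∑' J : {J : DyadicI // le J I}, ENNReal.ofReal (x J ^ 2) * len (J : DyadicI)

end DyadicI

open DyadicI

namespace DyadicI
open NNReal

instance : Countable DyadicI := by
  have : Function.Injective (fun I : DyadicI => (I.n, I.k)) := by
    rintro ⟨n, k, h⟩ ⟨n', k', h'⟩ hh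
    simp at hh; simp [hh.1, hh.2]
  exact this.countable

lemma toSet_nonempty (I : DyadicI) : I.toSet.Nonempty := by
  refine Set.nonempty_Ico.2 ?_
  apply div_lt_div_of_pos_right ?_ ?_
  · linarith
  · positivity

lemma volume_toSet (I : DyadicI) : volume I.toSet = I.len := by
  rw [toSet, Real.volume_Ico, len]
  have : ((I.k : ℝ) + 1) / 2 ^ I.n - I.k / 2 ^ I.n = (2 ^ I.n : ℝ)⁻¹ := by
    field_simp
    ring
  rw [this]
  rw [ENNReal.ofReal_inv_of_pos (by positivity), ENNReal.ofReal_pow (by norm_num)]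
  norm_num

lemma measurable_toSet (I : DyadicI) : MeasurableSet I.toSet := measurableSet_Ico

lemma len_ne_zero (I : DyadicI) : I.len ≠ 0 := by
  simp [len]

lemma len_ne_top (I : DyadicI) : I.len ≠ ⊤ := by
  simp [len]

lemma len_le_of_le {J I : DyadicI} (h : le J I) : J.len ≤ I.len := by
  rw [← volume_toSet, ← volume_toSet]
  exact measure_mono h

lemma n_le_of_le {J I : DyadicI} (h : le J I) : I.n ≤ J.n := by
  have := len_le_of_le h
  rw [len, len, ENNReal.inv_le_inv] at this
  have h2 : (2:ℝ≥0∞) ^ I.n ≤ 2 ^ J.n := this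
  by_contra hc
  push_neg at hc
  have : (2:ℝ≥0∞) ^ J.n < 2 ^ I.n := by
    have h3 : (2:ℝ≥0) ^ J.n < 2 ^ I.n := pow_lt_pow_right₀ one_lt_two hc
    have := (ENNReal.coe_lt_coe.2 h3)
    simpa using this
  exact absurd h2 (not_le.2 this)

lemma eq_of_le_of_n_le {J I : DyadicI} (h : le J I) (hn : J.n ≤ I.n) : J = I := by
  have hn' : I.n ≤ J.n := n_le_of_le h
  have hnn : J.n = I.n := le_antisymm hn hn'
  have hne : (J.k : ℝ) / 2 ^ J.n < (J.k + 1 : ℝ) / 2 ^ J.n := by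
    apply div_lt_div_of_pos_right (by linarith) (by positivity)
  rw [le, toSet, toSet, Set.Ico_subset_Ico_iff hne] at h
  obtain ⟨h1, h2⟩ := h
  rw [hnn] at h1 h2
  have hp : (0:ℝ) < 2 ^ I.n := by positivity
  rw [div_le_div_iff_of_pos_right hp] at h1 h2
  have hk : J.k = I.k := by
    have : (I.k:ℝ) ≤ J.k := h1
    have : (J.k:ℝ) + 1 ≤ I.k + 1 := h2
    obtain ⟨n1,k1,hh1⟩ := J
    obtain ⟨n2,k2,hh2⟩ := I
    simp_all
    omega
  obtain ⟨n1,k1,hh1⟩ := J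
  obtain ⟨n2,k2,hh2⟩ := I
  simp_all

lemma subset_or_disjoint {J L : DyadicI} (h : L.n ≤ J.n) :
    J.toSet ⊆ L.toSet ∨ Disjoint J.toSet L.toSet := by
  set d := J.n - L.n with hd
  have h2 : (2:ℝ) ^ J.n = 2 ^ L.n * 2 ^ d := by
    rw [← pow_add]; congr 1; omega
  by_cases hc : L.k * 2 ^ d ≤ J.k ∧ J.k < (L.k + 1) * 2 ^ d
  · left
    apply Set.Ico_subset_Ico
    · rw [div_le_div_iff₀ (by positivity) (by positivity)]
      rw [h2]
      have : (L.k : ℝ) * 2 ^ d ≤ J.k := by exact_mod_cast hc.1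
      nlinarith [pow_pos (by norm_num : (0:ℝ) < 2) L.n, pow_pos (by norm_num : (0:ℝ) < 2) d]
    · rw [div_le_div_iff₀ (by positivity) (by positivity)]
      rw [h2]
      have : (J.k : ℝ) + 1 ≤ (L.k + 1) * 2 ^ d := by
        have : J.k + 1 ≤ (L.k + 1) * 2 ^ d := hc.2
        exact_mod_cast this
      nlinarith [pow_pos (by norm_num : (0:ℝ) < 2) L.n, pow_pos (by norm_num : (0:ℝ) < 2) d]
  · right
    rw [toSet, toSet, Set.Ico_disjoint_Ico]
    rcases not_and_or.1 hc with hc1 | hc2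
    · push_neg at hc1
      have : (J.k : ℝ) + 1 ≤ L.k * 2 ^ d := by exact_mod_cast hc1
      apply le_trans (inf_le_left)
      apply le_trans ?_ (le_sup_right)
      rw [div_le_div_iff₀ (by positivity) (by positivity), h2]
      nlinarith [pow_pos (by norm_num : (0:ℝ) < 2) L.n, pow_pos (by norm_num : (0:ℝ) < 2) d]
    · push_neg at hc2
      have : ((L.k : ℝ) + 1) * 2 ^ d ≤ J.k := by exact_mod_cast hc2
      apply le_trans (inf_le_right)
      apply le_trans ?_ (le_sup_left)
      rw [div_le_div_iff₀ (by positivity) (by positivity), h2]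
      nlinarith [pow_pos (by norm_num : (0:ℝ) < 2) L.n, pow_pos (by norm_num : (0:ℝ) < 2) d]



lemma le_or_le_or_disjoint (J L : DyadicI) :
    le J L ∨ le L J ∨ Disjoint J.toSet L.toSet := by
  rcases le_total L.n J.n with h | h
  · rcases subset_or_disjoint h with h1 | h1
    · exact Or.inl h1
    · exact Or.inr (Or.inr h1)
  · rcases subset_or_disjoint h with h1 | h1
    · exact Or.inr (Or.inl h1)
    · exact Or.inr (Or.inr h1.symm)

lemma maxB_pairwiseDisjoint (B : Set DyadicI) :
    (maxB B).PairwiseDisjoint toSet := by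
  intro L1 h1 L2 h2 hne
  rcases le_or_le_or_disjoint L1 L2 with h | h | h
  · exact absurd (h1.2 L2 h2.1 h).symm hne
  · exact absurd (h2.2 L1 h1.1 h) hne
  · exact h

/-- sum of lengths of a pairwise disjoint subfamily under `L` is at most `len L`. -/
lemma disjoint_sum_le (B : Set DyadicI) (hB : B.PairwiseDisjoint toSet) (L : DyadicI) :
    ∑' J : {J : DyadicI // J ∈ B ∧ le J L}, len (J : DyadicI) ≤ len L := by
  set s : Set DyadicI := {J | J ∈ B ∧ le J L} with hs
  have hsub : s ⊆ B := fun J hJ => hJ.1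
  have hd : s.PairwiseDisjoint toSet := hB.subset hsub
  have hcount : s.Countable := Set.to_countable s
  have hmeas : ∀ J ∈ s, MeasurableSet (toSet J) := fun J _ => measurable_toSet J
  have h1 : volume (⋃ J ∈ s, toSet J) = ∑' J : s, volume (toSet (J : DyadicI)) :=
    measure_biUnion hcount hd hmeas
  have h2 : (⋃ J ∈ s, toSet J) ⊆ L.toSet := by
    simp only [Set.iUnion_subset_iff]
    exact fun J hJ => hJ.2
  calc ∑' J : {J : DyadicI // J ∈ B ∧ le J L}, len (J : DyadicI)
      = ∑' J : s, volume (toSet (J : DyadicI)) := by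
        apply tsum_congr; intro J; rw [volume_toSet]
    _ = volume (⋃ J ∈ s, toSet J) := h1.symm
    _ ≤ volume L.toSet := measure_mono h2
    _ = len L := volume_toSet L

lemma carleson_maxB_le_one (B : Set DyadicI) : carleson (maxB B) ≤ 1 := by
  rw [carleson]
  apply iSup_le
  intro L
  calc (len L)⁻¹ * ∑' J : {J : DyadicI // J ∈ maxB B ∧ le J L}, len (J : DyadicI)
      ≤ (len L)⁻¹ * len L := by
        gcongr
        exact disjoint_sum_le (maxB B) (maxB_pairwiseDisjoint B) L
    _ = 1 := ENNReal.inv_mul_cancel (len_ne_zero L) (len_ne_top L)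

lemma tsum_subtype_mono (s t : Set DyadicI) (h : s ⊆ t) (f : DyadicI → ℝ≥0∞) :
    ∑' x : s, f x ≤ ∑' x : t, f x := by
  rw [tsum_subtype, tsum_subtype]
  exact ENNReal.tsum_le_tsum (Set.indicator_le_indicator_of_subset h (fun _ => zero_le))

/-- every element of a collection has a maximal element of the collection above it -/
lemma exists_maxB_above (S : Set DyadicI) {J : DyadicI} (hJ : J ∈ S) :
    ∃ L ∈ maxB S, le J L := by
  classical
  have hne : ∃ m : ℕ, ∃ L, (L ∈ S ∧ le J L) ∧ L.n = m := ⟨J.n, J, ⟨hJ, fun _ h => h⟩, rfl⟩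
  set m := Nat.find hne with hm
  obtain ⟨L, ⟨hLS, hJL⟩, hLn⟩ := Nat.find_spec hne
  refine ⟨L, ⟨hLS, ?_⟩, hJL⟩
  intro L' hL' hLL'
  have hJL' : le J L' := fun x hx => hLL' (hJL hx)
  have h1 : m ≤ L'.n := Nat.find_le ⟨L', ⟨hL', hJL'⟩, rfl⟩
  have h2 : L'.n ≤ L.n := n_le_of_le hLL'
  exact (eq_of_le_of_n_le hLL' (by omega)).symm


end DyadicI

/-- the index collection `O(I) = (N(I) ∩ S(I)) ∪ max S(I)` covers only a
`M(M+1)/K`-fraction of `I`. -/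
theorem index_collection_estimate (π : Equiv.Perm DyadicI) (M : ℝ≥0∞)
    (hπ : ∀ C : Set DyadicI, carleson (π.symm '' C) ≤ M * carleson C)
    (I : DyadicI) (DI : Set DyadicI) (hDI : ∀ J ∈ DI, le J I)
    (K : ℝ≥0∞) (hK : 0 < K)
    (S : Set DyadicI)
    (hS : S = {J ∈ DI | K * (len J / len I) ≤ len (π J) / star (π '' DI)})
    (N : Set DyadicI) (hN : N = π.symm '' maxB (π '' DI))
    (O : Set DyadicI) (hO : O = (N ∩ S) ∪ maxB S)
    (hmaxS : (len I)⁻¹ * ∑' J : maxB S, len (J : DyadicI) ≤ M / K) :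
    (len I)⁻¹ * ∑' J : O, len (J : DyadicI) ≤ M * (M + 1) / K := by
  classical
  -- carleson N ≤ M
  have hcarlN : carleson N ≤ M := by
    rw [hN]
    calc carleson (π.symm '' maxB (π '' DI)) ≤ M * carleson (maxB (π '' DI)) :=
          hπ (maxB (π '' DI))
      _ ≤ M * 1 := by gcongr; exact carleson_maxB_le_one _
      _ = M := mul_one M
  -- local Carleson packing for N
  have hNsum : ∀ L : DyadicI,
      ∑' J : {J : DyadicI // J ∈ N ∧ le J L}, len (J : DyadicI) ≤ M * len L := by
    intro L
    have h1 : (len L)⁻¹ * ∑' J : {J : DyadicI // J ∈ N ∧ le J L}, len (J : DyadicI) ≤ M :=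
      le_trans (le_iSup (fun L : DyadicI =>
        (len L)⁻¹ * ∑' J : {J : DyadicI // J ∈ N ∧ le J L}, len (J : DyadicI)) L) hcarlN
    calc ∑' J : {J : DyadicI // J ∈ N ∧ le J L}, len (J : DyadicI)
        = len L * ((len L)⁻¹ * ∑' J : {J : DyadicI // J ∈ N ∧ le J L}, len (J : DyadicI)) := by
          rw [← mul_assoc, ENNReal.mul_inv_cancel (len_ne_zero L) (len_ne_top L), one_mul]
      _ ≤ len L * M := by gcongr
      _ = M * len L := mul_comm _ _
  -- total length of maximal intervals of S
  have hmaxSsum : ∑' J : maxB S, len (J : DyadicI) ≤ M / K * len I := by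
    have h1 : (len I)⁻¹ * ∑' J : maxB S, len (J : DyadicI) ≤ M / K := hmaxS
    calc ∑' J : maxB S, len (J : DyadicI)
        = len I * ((len I)⁻¹ * ∑' J : maxB S, len (J : DyadicI)) := by
          rw [← mul_assoc, ENNReal.mul_inv_cancel (len_ne_zero I) (len_ne_top I), one_mul]
      _ ≤ len I * (M / K) := by gcongr
      _ = M / K * len I := mul_comm _ _
  -- assignment of each element of S to a maximal interval above it
  have hgex : ∀ J ∈ S, ∃ L, L ∈ maxB S ∧ le J L := by
    intro J hJ
    obtain ⟨L, hL1, hL2⟩ := exists_maxB_above S hJ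
    exact ⟨L, hL1, hL2⟩
  set g : DyadicI → DyadicI := fun J => if h : J ∈ S then (hgex J h).choose else J with hg
  have hg1 : ∀ J (h : J ∈ S), g J ∈ maxB S ∧ le J (g J) := by
    intro J h
    simp only [hg, dif_pos h]
    exact (hgex J h).choose_spec
  -- the sum over N ∩ S, grouped by fibers of g
  have hNS : ∑' J : ↥(N ∩ S), len (J : DyadicI) ≤ M * (M / K * len I) := by
    set g' : ↥(N ∩ S) → DyadicI := fun J => g (J : DyadicI) with hg'
    rw [← tsum_fiberwise (fun J : ↥(N ∩ S) => len (J : DyadicI)) g']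
    have hfib : ∀ x : DyadicI,
        (∑' b : ↑(g' ⁻¹' {x}), len ((b : ↥(N ∩ S)) : DyadicI)) ≤
          Set.indicator (maxB S) (fun L => M * len L) x := by
      intro x
      by_cases hx : x ∈ maxB S
      · rw [Set.indicator_of_mem hx]
        have hle : (∑' b : ↑(g' ⁻¹' {x}), len ((b : ↥(N ∩ S)) : DyadicI)) ≤
            ∑' J : {J : DyadicI // J ∈ N ∧ le J x}, len (J : DyadicI) := by
          apply Summable.tsum_le_tsum_of_inj (fun b : ↑(g' ⁻¹' {x}) =>
            (⟨((b : ↥(N ∩ S)) : DyadicI),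
              (b : ↥(N ∩ S)).2.1, by
                have hb : g' (b : ↥(N ∩ S)) = x := b.2
                have := (hg1 ((b : ↥(N ∩ S)) : DyadicI) (b : ↥(N ∩ S)).2.2).2
                rw [show g ((b : ↥(N ∩ S)) : DyadicI) = x from hb] at this
                exact this⟩ : {J : DyadicI // J ∈ N ∧ le J x}))
            ?_ (fun _ _ => zero_le) (fun b => le_refl _) ENNReal.summable ENNReal.summable
          intro b1 b2 hb
          apply Subtype.ext; apply Subtype.ext
          simpa using congrArg Subtype.val hb
        exact le_trans hle (hNsum x)
      · rw [Set.indicator_of_notMem hx]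
        have : IsEmpty ↑(g' ⁻¹' {x}) := by
          constructor
          rintro ⟨b, hb⟩
          apply hx
          have := (hg1 (b : DyadicI) b.2.2).1
          rw [show g (b : DyadicI) = x from hb] at this
          exact this
        simp [tsum_empty]
    calc ∑' (x : DyadicI) (b : ↑(g' ⁻¹' {x})), len ((b : ↥(N ∩ S)) : DyadicI)
        ≤ ∑' x : DyadicI, Set.indicator (maxB S) (fun L => M * len L) x :=
          ENNReal.tsum_le_tsum hfib
      _ = ∑' L : maxB S, M * len (L : DyadicI) := (tsum_subtype (maxB S) _).symm
      _ = M * ∑' L : maxB S, len (L : DyadicI) := ENNReal.tsum_mul_left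
      _ ≤ M * (M / K * len I) := by gcongr
  -- assemble
  have hOsum : ∑' J : O, len (J : DyadicI) ≤ (M * (M / K) + M / K) * len I := by
    rw [hO]
    calc ∑' J : ↥((N ∩ S) ∪ maxB S), len (J : DyadicI)
        ≤ (∑' J : ↥(N ∩ S), len (J : DyadicI)) + ∑' J : maxB S, len (J : DyadicI) :=
          tsum_union_le _ _ _
      _ ≤ M * (M / K * len I) + M / K * len I := add_le_add hNS hmaxSsum
      _ = (M * (M / K) + M / K) * len I := by ring
  calc (len I)⁻¹ * ∑' J : O, len (J : DyadicI)
      ≤ (len I)⁻¹ * ((M * (M / K) + M / K) * len I) := by gcongr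
    _ = (M * (M / K) + M / K) * ((len I)⁻¹ * len I) := by ring
    _ = M * (M / K) + M / K := by
        rw [ENNReal.inv_mul_cancel (len_ne_zero I) (len_ne_top I), mul_one]
    _ = M * (M + 1) / K := by
        rw [mul_add, mul_one, ENNReal.add_div, mul_div_assoc]
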